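/- arXiv:1910.04813 — 2 statements merged into one kernel-verified Lean document; each statement's English description precedes it below -/
import Mathlib

section
/- Let σ be a permutation of size n and let σ' = insert(σ,(i,j)) be obtained by inserting an internal point (i,j) into σ. Then the number of internal insertions satisfies |I(σ)| ≤ |I(σ')| ≤ |I(σ)| + 2n, where I(τ) denotes the set of internal insertions for τ. -/
open Equiv

/-- Insertion of the point `(i, j)` into a permutation `σ` of size `n`:
the resulting permutation of size `n+1` sends `i ↦ j`, and points of `σ`
in columns `≥ i` are shifted right by one, points in rows `≥ j` up by one. -/
def insertPt {n : ℕ} (σ : Equiv.Perm (Fin n)) (i j : Fin (n + 1)) :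
    Equiv.Perm (Fin (n + 1)) :=
  (finSuccEquiv' i).trans ((Equiv.optionCongr σ).trans (finSuccEquiv' j).symm)

/-- Deletion of the point `(i, σ i)` from a permutation `σ` of size `m+1`:
the remaining points are shifted left/down to form a permutation of size `m`. -/
def deletePt {m : ℕ} (σ : Equiv.Perm (Fin (m + 1))) (i : Fin (m + 1)) :
    Equiv.Perm (Fin m) :=
  Equiv.removeNone ((finSuccEquiv' i).symm.trans (σ.trans (finSuccEquiv' (σ i))))

/-- The point `(a, τ a)` of `τ` is a record (external point): a left-to-right
minimum or maximum, or a right-to-left minimum or maximum. -/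
def IsRecord {m : ℕ} (τ : Equiv.Perm (Fin m)) (a : Fin m) : Prop :=
  (∀ b, b < a → τ b < τ a) ∨ (∀ b, b < a → τ a < τ b) ∨
  (∀ b, a < b → τ b < τ a) ∨ (∀ b, a < b → τ a < τ b)

open Classical in
/-- The set `I(σ)` of internal insertions for `σ`: pairs `(i,j)` such that the
inserted point is not a record of `insertPt σ i j`. -/
noncomputable def internalInsertions {n : ℕ} (σ : Equiv.Perm (Fin n)) :
    Finset (Fin (n + 1) × Fin (n + 1)) :=
  Finset.univ.filter fun p => ¬ IsRecord (insertPt σ p.1 p.2) p.1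

open Classical in
/-- `Jcount k σ = |𝒥(σ,k)|`, the number of internal insertion sequences of
length `k` for `σ`. -/
noncomputable def Jcount : (k : ℕ) → {n : ℕ} → Equiv.Perm (Fin n) → ℕ
  | 0, _, _ => 1
  | (k + 1), _, σ =>
      ∑ p : Fin (_ + 1) × Fin (_ + 1),
        if p ∈ internalInsertions σ then Jcount k (insertPt σ p.1 p.2) else 0

/-!
An insertion site `(a, b)` of `τ` is external exactly when all points of `τ` on one side of
column `a` lie on one side of row `b`. The sites of `σ` embed into those of
`σ' = insertPt σ i j` by skipping column `i + 1` and row `j + 1`, the sites just right of and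
just above the new point. A site in the image is external for `σ'` only if it was external for
`σ`, which gives the lower bound. Conversely an external site of `σ` stays external for `σ'`
because `(i, j)` is internal: on each side of column `i` there are old points on both sides of
row `j`, which forces the new point onto the same side of row `b` as the old ones. The sites
`(i + 1, 0)`, `(i + 1, n + 1)` and `(0, j + 1)` are external for `σ'` and lie outside the
image, so the number of external sites grows by at least `3`, while the number of all sites
grows by `(n + 2)² - (n + 1)² = 2n + 3`.
-/

open Finset Fin

section
variable {n : ℕ}

lemma val_succAbove_eq_ite (p : Fin (n + 1)) (k : Fin n) :
    (p.succAbove k : ℕ) = if (k : ℕ) < p then (k : ℕ) else k + 1 := by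
  unfold succAbove; split_ifs <;> simp_all [Fin.lt_def]

lemma castSucc_succAbove_lt_succ_succAbove_iff (p : Fin (n + 1)) (k : Fin n) (a : Fin (n + 1)) :
    castSucc (p.succAbove k) < p.succ.succAbove a ↔ castSucc k < a := by
  simp only [Fin.lt_def, val_castSucc, val_succAbove_eq_ite, val_succ]
  split_ifs <;> omega

lemma castSucc_lt_succ_succAbove_iff (p a : Fin (n + 1)) :
    castSucc p < p.succ.succAbove a ↔ p < a := by
  simp only [Fin.lt_def, val_castSucc, val_succAbove_eq_ite, val_succ]
  split_ifs <;> omega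

end

section
variable {m : ℕ}

lemma isRecord_iff_exists_side (ρ : Perm (Fin m)) (a : Fin m) :
    IsRecord ρ a ↔
      ∃ s t : Bool, ∀ x, x ≠ a → decide (x < a) = s → decide (ρ x < ρ a) = t := by
  have hρ : ∀ x, x ≠ a → ρ x ≠ ρ a := fun x hx => ρ.injective.ne hx
  constructor
  · rintro (h | h | h | h)
    · exact ⟨true, true, fun x _ hx => by simpa using h x (by simpa using hx)⟩
    · exact ⟨true, false, fun x _ hx => by simpa using (h x (by simpa using hx)).le⟩
    · refine ⟨false, true, fun x hxa hx => ?_⟩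
      simpa using h x (lt_of_le_of_ne (by simpa using hx) (Ne.symm hxa))
    · refine ⟨false, false, fun x hxa hx => ?_⟩
      simpa using (h x (lt_of_le_of_ne (by simpa using hx) (Ne.symm hxa))).le
  · rintro ⟨_ | _, _ | _, h⟩
    · refine Or.inr <| Or.inr <| Or.inr fun x hx => ?_
      exact lt_of_le_of_ne (by simpa using h x hx.ne' (by simpa using hx.le)) (hρ x hx.ne').symm
    · exact Or.inr <| Or.inr <| Or.inl fun x hx => by
        simpa using h x hx.ne' (by simpa using hx.le)
    · refine Or.inr <| Or.inl fun x hx => ?_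
      exact lt_of_le_of_ne (by simpa using h x hx.ne (by simpa using hx)) (hρ x hx.ne).symm
    · exact Or.inl fun x hx => by simpa using h x hx.ne (by simpa using hx)

end

section
variable {n : ℕ}

@[simp] lemma insertPt_apply_self (σ : Perm (Fin n)) (i j : Fin (n + 1)) :
    insertPt σ i j i = j := by
  simp [insertPt]

@[simp] lemma insertPt_apply_succAbove (σ : Perm (Fin n)) (i j : Fin (n + 1)) (k : Fin n) :
    insertPt σ i j (i.succAbove k) = j.succAbove (σ k) := by
  simp [insertPt]

/-- `τ` has all its points on one side of column `a` (left if `s`, right otherwise) on one side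
of row `b` (below if `t`, above otherwise). -/
def IsExternalInsertion (τ : Perm (Fin n)) (a b : Fin (n + 1)) : Prop :=
  ∃ s t : Bool, ∀ k, decide (castSucc k < a) = s → decide (castSucc (τ k) < b) = t

lemma isRecord_insertPt_self_iff (τ : Perm (Fin n)) (a b : Fin (n + 1)) :
    IsRecord (insertPt τ a b) a ↔ IsExternalInsertion τ a b := by
  simp only [isRecord_iff_exists_side, IsExternalInsertion, forall_iff_succAbove a, ne_eq,
    not_true_eq_false, IsEmpty.forall_iff, true_and, succAbove_ne, not_false_eq_true,
    forall_const, insertPt_apply_succAbove, insertPt_apply_self, succAbove_lt_iff_castSucc_lt]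

lemma isExternalInsertion_col_zero (τ : Perm (Fin n)) (b : Fin (n + 1)) :
    IsExternalInsertion τ 0 b :=
  ⟨true, true, fun k hk => by simp at hk⟩

lemma isExternalInsertion_row_zero (τ : Perm (Fin n)) (a : Fin (n + 1)) :
    IsExternalInsertion τ a 0 :=
  ⟨true, false, fun k _ => by simp⟩

lemma isExternalInsertion_row_last (τ : Perm (Fin n)) (a : Fin (n + 1)) :
    IsExternalInsertion τ a (last n) :=
  ⟨true, true, fun k _ => by simp [castSucc_lt_last]⟩

open Classical in
noncomputable def externalInsertions (τ : Perm (Fin n)) : Finset (Fin (n + 1) × Fin (n + 1)) :=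
  univ.filter fun p => IsExternalInsertion τ p.1 p.2

lemma mem_internalInsertions_iff (τ : Perm (Fin n)) (p : Fin (n + 1) × Fin (n + 1)) :
    p ∈ internalInsertions τ ↔ ¬ IsExternalInsertion τ p.1 p.2 := by
  simp [internalInsertions, isRecord_insertPt_self_iff]

lemma mem_externalInsertions_iff (τ : Perm (Fin n)) (p : Fin (n + 1) × Fin (n + 1)) :
    p ∈ externalInsertions τ ↔ IsExternalInsertion τ p.1 p.2 := by
  simp [externalInsertions]

lemma card_internalInsertions_add_card_externalInsertions (τ : Perm (Fin n)) :
    #(internalInsertions τ) + #(externalInsertions τ) = (n + 1) * (n + 1) := by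
  classical
  have : internalInsertions τ = univ.filter fun p => ¬ IsExternalInsertion τ p.1 p.2 := by
    ext p; simp [mem_internalInsertions_iff]
  rw [this, externalInsertions, add_comm, card_filter_add_card_filter_not]
  simp

def liftInsertion (i j : Fin (n + 1)) : Fin (n + 1) × Fin (n + 1) ↪ Fin (n + 2) × Fin (n + 2) :=
  i.succ.succAboveEmb.prodMap j.succ.succAboveEmb

@[simp] lemma liftInsertion_apply (i j : Fin (n + 1)) (p : Fin (n + 1) × Fin (n + 1)) :
    liftInsertion i j p = (i.succ.succAbove p.1, j.succ.succAbove p.2) := rfl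

variable (σ : Perm (Fin n)) (i j : Fin (n + 1))

lemma IsExternalInsertion.of_insertPt_succAbove {a b : Fin (n + 1)}
    (h : IsExternalInsertion (insertPt σ i j) (i.succ.succAbove a) (j.succ.succAbove b)) :
    IsExternalInsertion σ a b := by
  obtain ⟨s, t, h⟩ := h
  refine ⟨s, t, fun k hk => ?_⟩
  simpa [castSucc_succAbove_lt_succ_succAbove_iff] using
    h (i.succAbove k) (by simpa [castSucc_succAbove_lt_succ_succAbove_iff] using hk)

lemma IsExternalInsertion.insertPt_succAbove {a b : Fin (n + 1)}
    (hij : ¬ IsExternalInsertion σ i j) (h : IsExternalInsertion σ a b) :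
    IsExternalInsertion (insertPt σ i j) (i.succ.succAbove a) (j.succ.succAbove b) := by
  obtain ⟨s, t, h⟩ := h
  refine ⟨s, t, (forall_iff_succAbove i).2 ⟨fun hi => ?_, fun k hk => ?_⟩⟩
  · -- as `(i, j)` is internal, some `k` on side `s` of `i` is not on side `t` of `j`; that `k`
    -- is on side `s` of `a`, hence on side `t` of `b`, and so is `j`
    obtain ⟨k, hki, hkj⟩ :
        ∃ k, decide (castSucc k < i) = s ∧ decide (castSucc (σ k) < j) ≠ t := by
      by_contra! hcon
      exact hij ⟨s, t, hcon⟩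
    simp only [castSucc_lt_succ_succAbove_iff, insertPt_apply_self] at hi ⊢
    have hkb := h k (by grind [Fin.lt_def])
    grind [Fin.lt_def]
  · simpa [castSucc_succAbove_lt_succ_succAbove_iff] using
      h k (by simpa [castSucc_succAbove_lt_succ_succAbove_iff] using hk)

lemma card_internalInsertions_le_insertPt :
    #(internalInsertions σ) ≤ #(internalInsertions (insertPt σ i j)) := by
  rw [← card_map (liftInsertion i j)]
  refine card_le_card fun p hp => ?_
  obtain ⟨⟨a, b⟩, hab, rfl⟩ := mem_map.1 hp
  rw [mem_internalInsertions_iff] at hab ⊢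
  exact fun h => hab h.of_insertPt_succAbove

lemma card_externalInsertions_add_three_le_insertPt (hij : ¬ IsExternalInsertion σ i j) :
    #(externalInsertions σ) + 3 ≤ #(externalInsertions (insertPt σ i j)) := by
  set extra : Finset (Fin (n + 2) × Fin (n + 2)) := {(i.succ, 0), (i.succ, last _), (0, j.succ)}
  have h_extra : #extra = 3 := card_eq_three.2 ⟨_, _, _, by simp, by simp, by simp, rfl⟩
  have h_disj : Disjoint ((externalInsertions σ).map (liftInsertion i j)) extra := by
    refine disjoint_left.2 fun p hp => ?_
    obtain ⟨⟨a, b⟩, -, rfl⟩ := mem_map.1 hp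
    simp [extra, succAbove_ne]
  have h_sub : (externalInsertions σ).map (liftInsertion i j) ∪ extra ⊆
      externalInsertions (insertPt σ i j) := by
    intro p hp
    simp only [mem_union, mem_map, extra, mem_insert, mem_singleton] at hp
    rw [mem_externalInsertions_iff]
    rcases hp with ⟨⟨a, b⟩, hab, rfl⟩ | rfl | rfl | rfl
    · exact ((mem_externalInsertions_iff _ _).1 hab).insertPt_succAbove σ i j hij
    · exact isExternalInsertion_row_zero _ _
    · exact isExternalInsertion_row_last _ _
    · exact isExternalInsertion_col_zero _ _
  calc #(externalInsertions σ) + 3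
      = #((externalInsertions σ).map (liftInsertion i j) ∪ extra) := by
        rw [card_union_of_disjoint h_disj, card_map, h_extra]
    _ ≤ _ := card_le_card h_sub

lemma card_internalInsertions_insertPt_le (h : (i, j) ∈ internalInsertions σ) :
    #(internalInsertions (insertPt σ i j)) ≤ #(internalInsertions σ) + 2 * n := by
  have := card_internalInsertions_add_card_externalInsertions σ
  have := card_internalInsertions_add_card_externalInsertions (insertPt σ i j)
  have := card_externalInsertions_add_three_le_insertPt σ i j
    ((mem_internalInsertions_iff σ _).1 h)
  nlinarith

end

/-- if `σ'` is obtained from `σ` (of size `n`) by an internal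
insertion, then `|I(σ)| ≤ |I(σ')| ≤ |I(σ)| + 2n`. -/
theorem internal_insertions_growth {n : ℕ} (σ : Equiv.Perm (Fin n))
    (i j : Fin (n + 1)) (h : (i, j) ∈ internalInsertions σ) :
    (internalInsertions σ).card ≤ (internalInsertions (insertPt σ i j)).card ∧
    (internalInsertions (insertPt σ i j)).card ≤ (internalInsertions σ).card + 2 * n :=
  ⟨card_internalInsertions_le_insertPt σ i j, card_internalInsertions_insertPt_le σ i j h⟩
end

section
/- Let k = k(n) = o(√n) and let f(n,z) = (2z(n−z))^k for integer z. Then the Riemann sum approximation Σ_{z=δ_n}^{n−δ_n} (2z(n−z))^k ~ 2^k·n^{2k+1}·∫₀¹ (t(1−t))^k dt as n → ∞, where δ_n = o(n) and δ_n ≥ n^{0.9}; consequently Σ_{z=δ_n}^{n−δ_n} (2z(n−z))^k ~ 2^k·n^{2k+1}·(k!)²/(2k+1)!. -/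
/-!
After the substitution `x = n t` the denominator is `2 ^ k * ∫₀ⁿ (x (n - x)) ^ k dx`, and the sum
is a left Riemann sum with unit steps of `f x = (x (n - x)) ^ k` over `[δ + 1, n - δ]`. On a unit
step `f` moves by at most `n k (n² / 4) ^ (k - 1)`, so the sum misses the integral over
`[δ + 1, n - δ]` by `O(k (n² / 4) ^ k)`, while each of the two end pieces contributes at most
`(δ + 1) ((δ + 1) n) ^ k`. Since `∫₀¹ (t (1 - t)) ^ k = k! ² / (2k + 1)! ≥ 1 / ((2k + 1) 4 ^ k)`
(the central binomial coefficient is at most `4 ^ k`), the relative error is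
`O(k² / n + δ / n)`, which tends to `0`.
-/

open Filter Finset MeasureTheory
open scoped Nat Topology

theorem integral_pow_mul_one_sub_pow (m j : ℕ) :
    ∫ x in (0:ℝ)..1, x ^ m * (1 - x) ^ j = m ! * j ! / (m + j + 1)! := by
  induction j generalizing m with
  | zero =>
    simp only [pow_zero, mul_one, integral_pow, Nat.factorial_zero, Nat.cast_one, add_zero]
    rw [Nat.factorial_succ]
    push_cast
    field_simp
    ring
  | succ j ih =>
    have hu : ∀ x ∈ Set.uIcc (0:ℝ) 1,
        HasDerivAt (fun x : ℝ => (1 - x) ^ (j + 1)) (-((j + 1) * (1 - x) ^ j)) x := fun x _ =>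
      (((hasDerivAt_id x).const_sub 1).pow (j + 1)).congr_deriv (by simp)
    have hv : ∀ x ∈ Set.uIcc (0:ℝ) 1,
        HasDerivAt (fun x : ℝ => x ^ (m + 1) / (m + 1)) (x ^ m) x := fun x _ =>
      ((hasDerivAt_pow (m + 1) x).div_const ((m:ℝ) + 1)).congr_deriv (by field_simp; simp)
    have ibp := intervalIntegral.integral_mul_deriv_eq_deriv_mul hu hv
      (by apply Continuous.intervalIntegrable; fun_prop)
      (by apply Continuous.intervalIntegrable; fun_prop)
    simp only [sub_self, one_pow, zero_pow (Nat.succ_ne_zero _), zero_mul, zero_div, mul_zero,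
      sub_zero, zero_sub, neg_mul, intervalIntegral.integral_neg, neg_neg] at ibp
    have hrec : ∫ x in (0:ℝ)..1, x ^ m * (1 - x) ^ (j + 1)
        = (j + 1) / (m + 1) * ∫ x in (0:ℝ)..1, x ^ (m + 1) * (1 - x) ^ j := by
      rw [← intervalIntegral.integral_const_mul]
      calc _ = ∫ x in (0:ℝ)..1, (1 - x) ^ (j + 1) * x ^ m := by congr 1; ext x; ring
        _ = _ := ibp
        _ = _ := by congr 1; ext x; ring
    rw [hrec, ih, show m + 1 + j + 1 = m + (j + 1) + 1 by ring, Nat.factorial_succ m,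
      Nat.factorial_succ j]
    push_cast
    field_simp

theorem integral_mul_one_sub_pow (K : ℕ) :
    ∫ t in (0:ℝ)..1, (t * (1 - t)) ^ K = K ! ^ 2 / (2 * K + 1)! := by
  simp_rw [mul_pow, integral_pow_mul_one_sub_pow, two_mul, sq]

theorem inv_le_factorial_sq_div_factorial (K : ℕ) :
    ((2 * K + 1) * 4 ^ K : ℝ)⁻¹ ≤ K ! ^ 2 / (2 * K + 1)! := by
  have hfac : ((2 * K + 1)! : ℝ) = (2 * K + 1) * K.centralBinom * K ! ^ 2 := by
    rw [Nat.factorial_succ, Nat.centralBinom_eq_two_mul_choose,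
      ← Nat.choose_mul_factorial_mul_factorial (show K ≤ 2 * K by omega),
      show 2 * K - K = K by omega]
    push_cast
    ring
  have := Nat.centralBinom_pos K
  rw [hfac, inv_eq_one_div, div_le_div_iff₀ (by positivity) (by positivity), one_mul, mul_comm]
  gcongr
  exact_mod_cast Nat.centralBinom_le_four_pow K

theorem integral_mul_sub_pow (a : ℝ) (K : ℕ) :
    ∫ x in (0:ℝ)..a, (x * (a - x)) ^ K = a ^ (2 * K + 1) * ∫ t in (0:ℝ)..1, (t * (1 - t)) ^ K := by
  have hscale := intervalIntegral.smul_integral_comp_mul_left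
    (fun x => (x * (a - x)) ^ K) a (a := 0) (b := 1)
  have hpoint : ∀ t, (a * t * (a - a * t)) ^ K = (a ^ 2) ^ K * (t * (1 - t)) ^ K := fun t => by
    rw [← mul_pow]; ring
  simp only [mul_zero, mul_one, smul_eq_mul, hpoint, intervalIntegral.integral_const_mul] at hscale
  rw [← hscale]
  ring

theorem div_le_integral_mul_sub_pow {a : ℝ} (ha : 0 ≤ a) (K : ℕ) :
    a ^ (2 * K + 1) / ((2 * K + 1) * 4 ^ K) ≤ ∫ x in (0:ℝ)..a, (x * (a - x)) ^ K := by
  rw [integral_mul_sub_pow, integral_mul_one_sub_pow, div_eq_mul_inv]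
  exact mul_le_mul_of_nonneg_left (inv_le_factorial_sq_div_factorial K) (by positivity)

theorem abs_sum_sub_integral_le {f : ℝ → ℝ} {a L : ℝ} {N : ℕ}
    (hf : ∀ i < N, IntervalIntegrable f volume (a + i) (a + i + 1))
    (hL : ∀ i < N, ∀ x ∈ Set.Icc (a + i) (a + i + 1), |f (a + i) - f x| ≤ L) :
    |∑ i ∈ range N, f (a + i) - ∫ x in a..a + N, f x| ≤ N * L := by
  have hsplit : ∫ x in a..a + N, f x = ∑ i ∈ range N, ∫ x in (a + i)..(a + i + 1), f x := by
    have := intervalIntegral.sum_integral_adjacent_intervals (a := fun i : ℕ => a + i)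
      (μ := volume) (f := f) (n := N) (fun i hi => by simpa [add_assoc] using hf i hi)
    simpa [add_assoc] using this.symm
  have hterm : ∀ i < N, |f (a + i) - ∫ x in (a + i)..(a + i + 1), f x| ≤ L := by
    intro i hi
    have hconst : f (a + i) - ∫ x in (a + i)..(a + i + 1), f x
        = ∫ x in (a + i)..(a + i + 1), (f (a + i) - f x) := by
      rw [intervalIntegral.integral_sub intervalIntegrable_const (hf i hi)]
      simp
    have := intervalIntegral.norm_integral_le_of_norm_le_const (C := L)
      (f := fun x => f (a + i) - f x)
      fun x hx => hL i hi x ((Set.uIoc_subset_uIcc.trans (Set.uIcc_of_le (by linarith)).subset) hx)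
    simpa [hconst] using this
  rw [hsplit, ← sum_sub_distrib]
  calc _ ≤ ∑ i ∈ range N, |f (a + i) - ∫ x in (a + i)..(a + i + 1), f x| :=
        abs_sum_le_sum_abs _ _
    _ ≤ ∑ _i ∈ range N, L := sum_le_sum fun i hi => hterm i (mem_range.1 hi)
    _ = N * L := by simp

theorem abs_mul_sub_pow_sub_le {a x y : ℝ} (hx : x ∈ Set.Icc 0 a) (hy : y ∈ Set.Icc 0 a) (K : ℕ) :
    |(x * (a - x)) ^ K - (y * (a - y)) ^ K| ≤ |x - y| * a * K * (a ^ 2 / 4) ^ (K - 1) := by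
  obtain ⟨hx₀, hxa⟩ := hx
  obtain ⟨hy₀, hya⟩ := hy
  have hbound : ∀ z, 0 ≤ z → z ≤ a → |z * (a - z)| ≤ a ^ 2 / 4 := fun z hz₀ hza => by
    rw [abs_of_nonneg (mul_nonneg hz₀ (by linarith))]
    nlinarith [sq_nonneg (a - 2 * z)]
  have hdiff : |x * (a - x) - y * (a - y)| ≤ |x - y| * a := by
    rw [show x * (a - x) - y * (a - y) = (x - y) * (a - x - y) by ring, abs_mul]
    exact mul_le_mul_of_nonneg_left (abs_le.2 ⟨by linarith, by linarith⟩) (abs_nonneg _)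
  calc _ ≤ |x * (a - x) - y * (a - y)| * K * max |x * (a - x)| |y * (a - y)| ^ (K - 1) :=
        abs_pow_sub_pow_le ..
    _ ≤ |x - y| * a * K * (a ^ 2 / 4) ^ (K - 1) := by
        have ha : 0 ≤ a := hx₀.trans hxa
        gcongr
        exact max_le (hbound x hx₀ hxa) (hbound y hy₀ hya)

theorem abs_integral_mul_sub_pow_le {a b c M : ℝ} (hb : 0 ≤ b) (hbc : b ≤ c) (hc : c ≤ a)
    (hM : ∀ x ∈ Set.Icc b c, x * (a - x) ≤ M) (K : ℕ) :
    |∫ x in b..c, (x * (a - x)) ^ K| ≤ (c - b) * M ^ K := by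
  have := intervalIntegral.norm_integral_le_of_norm_le_const (f := fun x => (x * (a - x)) ^ K)
    (a := b) (b := c) (C := M ^ K) fun x hx => by
      have hx' := (Set.uIoc_subset_uIcc.trans (Set.uIcc_of_le hbc).subset) hx
      have hpos : 0 ≤ x * (a - x) := mul_nonneg (by linarith [hx'.1]) (by linarith [hx'.2])
      rw [Real.norm_eq_abs, abs_pow, abs_of_nonneg hpos]
      exact pow_le_pow_left₀ hpos (hM x hx') K
  rwa [Real.norm_eq_abs, abs_of_nonneg (sub_nonneg.2 hbc), mul_comm] at this

theorem abs_sum_mul_sub_pow_sub_integral_le {n d : ℕ} (h : 2 * d + 1 ≤ n) (K : ℕ) :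
    |∑ z ∈ Ioo d (n - d), ((z : ℝ) * (n - z)) ^ K - ∫ x in (0:ℝ)..n, (x * (n - x)) ^ K|
      ≤ 4 * K * ((n : ℝ) ^ 2 / 4) ^ K + 2 * ((d + 1) * ((d + 1) * n) ^ K) := by
  set f : ℝ → ℝ := fun x => (x * (n - x)) ^ K
  have hfi : ∀ b c, IntervalIntegrable f volume b c := fun b c =>
    (by fun_prop : Continuous f).intervalIntegrable b c
  set N := n - d - (d + 1)
  have hN : (d + 1 : ℝ) + N = n - d := by
    simp only [N]; rw [Nat.cast_sub (by omega), Nat.cast_sub (by omega)]; push_cast; ring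
  have hNn : (N : ℝ) ≤ n := by exact_mod_cast (show N ≤ n by omega)
  have hdn : (d : ℝ) + 1 ≤ n - d := by rw [← hN]; simp
  have hsum : ∑ z ∈ Ioo d (n - d), ((z : ℝ) * (n - z)) ^ K = ∑ i ∈ range N, f (d + 1 + i) := by
    rw [show Ioo d (n - d) = Ico (d + 1) (n - d) by ext; simp, sum_Ico_eq_sum_range]
    push_cast
    rfl
  have hsplit : ∫ x in (0:ℝ)..n, f x
      = (∫ x in (0:ℝ)..d + 1, f x) + (∫ x in (d + 1 : ℝ)..n - d, f x)
        + ∫ x in (n - d : ℝ)..n, f x := by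
    rw [intervalIntegral.integral_add_adjacent_intervals (hfi _ _) (hfi _ _),
      intervalIntegral.integral_add_adjacent_intervals (hfi _ _) (hfi _ _)]
  have hmid : |∑ i ∈ range N, f (d + 1 + i) - ∫ x in (d + 1 : ℝ)..n - d, f x|
      ≤ 4 * K * ((n : ℝ) ^ 2 / 4) ^ K := by
    have hstep := abs_sum_sub_integral_le (f := f) (a := d + 1) (N := N)
      (L := n * K * ((n : ℝ) ^ 2 / 4) ^ (K - 1)) (fun i _ => hfi _ _) fun i hi x hx => by
        have hi' : (d : ℝ) + 1 + i + 1 ≤ n := by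
          have : (i : ℝ) + 1 ≤ N := by exact_mod_cast hi
          linarith
        calc _ ≤ |(d + 1 + i : ℝ) - x| * n * K * ((n : ℝ) ^ 2 / 4) ^ (K - 1) :=
              abs_mul_sub_pow_sub_le ⟨by positivity, by linarith⟩
                ⟨by linarith [hx.1], by linarith [hx.2]⟩ K
          _ ≤ 1 * n * K * ((n : ℝ) ^ 2 / 4) ^ (K - 1) := by
              gcongr
              exact abs_le.2 ⟨by linarith [hx.2], by linarith [hx.1]⟩
          _ = _ := by ring
    rw [hN] at hstep
    refine hstep.trans ?_
    calc (N : ℝ) * (n * K * ((n : ℝ) ^ 2 / 4) ^ (K - 1))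
        ≤ n * (n * K * ((n : ℝ) ^ 2 / 4) ^ (K - 1)) := by gcongr
      _ = 4 * K * ((n : ℝ) ^ 2 / 4) ^ K := by
        rcases K with _ | K
        · simp
        · rw [pow_succ]; push_cast; ring
  have hleft : |∫ x in (0:ℝ)..d + 1, f x| ≤ (d + 1) * ((d + 1) * n) ^ K := by
    simpa using abs_integral_mul_sub_pow_le le_rfl (by positivity) (by linarith)
      (fun x hx => by nlinarith [hx.1, hx.2]) K
  have hright : |∫ x in (n - d : ℝ)..n, f x| ≤ (d + 1) * ((d + 1) * n) ^ K := by
    refine (abs_integral_mul_sub_pow_le (M := (d + 1) * n) (by linarith) (by linarith) le_rfl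
      (fun x hx => by nlinarith [hx.1, hx.2]) K).trans ?_
    gcongr
    linarith
  rw [hsum, hsplit, abs_le]
  obtain ⟨hmid₁, hmid₂⟩ := abs_le.1 hmid
  obtain ⟨hleft₁, hleft₂⟩ := abs_le.1 hleft
  obtain ⟨hright₁, hright₂⟩ := abs_le.1 hright
  constructor <;> linarith

theorem two_mul_add_one_mul_pow_le {x : ℝ} (hx₀ : 0 ≤ x) (hx : x ≤ 1 / 2) (K : ℕ) :
    (2 * K + 1) * x ^ K ≤ 2 := by
  have hK : (2 * K + 1 : ℝ) ≤ 2 * 2 ^ K := by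
    have : (K : ℝ) + 1 ≤ 2 ^ K := by exact_mod_cast Nat.lt_two_pow_self
    linarith
  calc (2 * K + 1) * x ^ K ≤ 2 * 2 ^ K * (1 / 2) ^ K := by gcongr
    _ = 2 := by rw [mul_assoc, ← mul_pow]; norm_num

theorem abs_sum_div_integral_sub_one_le {n d : ℕ} (h : 8 * (d + 1) ≤ n) (K : ℕ) :
    |(∑ z ∈ Ioo d (n - d), ((z : ℝ) * (n - z)) ^ K) / (∫ x in (0:ℝ)..n, (x * (n - x)) ^ K) - 1|
      ≤ 12 * K ^ 2 / n + 4 * (d + 1) / n := by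
  have hn : (0 : ℝ) < n := by exact_mod_cast (show 0 < n by omega)
  have hdn : 8 * ((d : ℝ) + 1) ≤ n := by exact_mod_cast h
  set J := ∫ x in (0:ℝ)..n, (x * (n - x)) ^ K
  set J₀ := (n : ℝ) ^ (2 * K + 1) / ((2 * K + 1) * 4 ^ K)
  have hJ₀ : 0 < J₀ := by positivity
  have hJ₀J : J₀ ≤ J := div_le_integral_mul_sub_pow hn.le K
  have hmid : 4 * K * ((n : ℝ) ^ 2 / 4) ^ K ≤ 12 * K ^ 2 / n * J₀ := by
    have hK : 4 * (K : ℝ) * (2 * K + 1) ≤ 12 * K ^ 2 := by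
      have : (K : ℝ) ≤ K ^ 2 := by exact_mod_cast Nat.le_self_pow two_ne_zero K
      linarith
    calc 4 * K * ((n : ℝ) ^ 2 / 4) ^ K
        = 4 * K * (2 * K + 1) / (2 * K + 1) * ((n : ℝ) ^ 2 / 4) ^ K := by field_simp
      _ ≤ 12 * K ^ 2 / (2 * K + 1) * ((n : ℝ) ^ 2 / 4) ^ K := by gcongr
      _ = 12 * K ^ 2 / n * J₀ := by
        simp only [J₀]; rw [div_pow, ← pow_mul, pow_succ]; field_simp; ring
  have htail : 2 * ((d + 1) * ((d + 1) * n) ^ K) ≤ 4 * (d + 1) / n * J₀ := by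
    have hx := two_mul_add_one_mul_pow_le (x := 4 * (d + 1) / n) (by positivity)
      (by rw [div_le_iff₀ hn]; linarith) K
    calc 2 * ((d + 1) * ((d + 1) * n) ^ K)
        = 2 * (d + 1) / n * J₀ * ((2 * K + 1) * (4 * (d + 1) / n) ^ K) := by
          simp only [J₀]; rw [div_pow, mul_pow, mul_pow, pow_succ, pow_mul]; field_simp; ring
      _ ≤ 2 * (d + 1) / n * J₀ * 2 := by gcongr
      _ = 4 * (d + 1) / n * J₀ := by ring
  rw [div_sub_one (hJ₀.trans_le hJ₀J).ne', abs_div, abs_of_pos (hJ₀.trans_le hJ₀J),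
    div_le_iff₀ (hJ₀.trans_le hJ₀J)]
  calc _ ≤ 4 * K * ((n : ℝ) ^ 2 / 4) ^ K + 2 * ((d + 1) * ((d + 1) * n) ^ K) :=
        abs_sum_mul_sub_pow_sub_integral_le (by omega) K
    _ ≤ (12 * K ^ 2 / n + 4 * (d + 1) / n) * J₀ := by linarith
    _ ≤ _ := by gcongr

theorem tendsto_sum_mul_sub_pow_div_integral {k δ : ℕ → ℕ}
    (hk : Tendsto (fun n : ℕ => (k n : ℝ) / Real.sqrt n) atTop (𝓝 0))
    (hδ : Tendsto (fun n : ℕ => (δ n : ℝ) / n) atTop (𝓝 0)) :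
    Tendsto (fun n : ℕ => (∑ z ∈ Ioo (δ n) (n - δ n), ((z : ℝ) * (n - z)) ^ k n) /
      ∫ x in (0:ℝ)..n, (x * (n - x)) ^ k n) atTop (𝓝 1) := by
  have hk₂ : Tendsto (fun n : ℕ => (k n : ℝ) ^ 2 / n) atTop (𝓝 0) := by
    simpa [div_pow] using hk.pow 2
  have hδ₁ : Tendsto (fun n : ℕ => ((δ n : ℝ) + 1) / n) atTop (𝓝 0) := by
    simpa [add_div] using hδ.add tendsto_one_div_atTop_nhds_zero_nat
  have hlarge : ∀ᶠ n : ℕ in atTop, 8 * (δ n + 1) ≤ n := by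
    filter_upwards [hδ₁.eventually (gt_mem_nhds (show (0 : ℝ) < 1 / 8 by norm_num)),
      eventually_gt_atTop 0] with n hsmall hpos
    rw [div_lt_iff₀ (by exact_mod_cast hpos)] at hsmall
    exact_mod_cast (show (8 * ((δ n : ℝ) + 1)) ≤ n by linarith)
  have hbound : Tendsto (fun n : ℕ => 12 * (k n : ℝ) ^ 2 / n + 4 * ((δ n : ℝ) + 1) / n)
      atTop (𝓝 0) := by
    simpa [mul_div_assoc] using (hk₂.const_mul 12).add (hδ₁.const_mul 4)
  rw [tendsto_iff_norm_sub_tendsto_zero]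
  refine squeeze_zero' (Eventually.of_forall fun n => norm_nonneg _) ?_ hbound
  filter_upwards [hlarge] with n hn
  exact abs_sum_div_integral_sub_one_le hn (k n)

theorem riemann_sum_asymptotics_general (k δ : ℕ → ℕ)
    (hk : Tendsto (fun n : ℕ => (k n : ℝ) / Real.sqrt n) atTop (nhds 0))
    (hδo : Tendsto (fun n : ℕ => (δ n : ℝ) / n) atTop (nhds 0)) :
    Tendsto
      (fun n : ℕ =>
        (∑ z ∈ Finset.Ioo (δ n) (n - δ n), (2 * (z : ℝ) * ((n : ℝ) - z)) ^ k n) /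
          (2 ^ k n * (n : ℝ) ^ (2 * k n + 1) *
            ∫ t in (0 : ℝ)..1, (t * (1 - t)) ^ k n))
      atTop (nhds 1) ∧
    Tendsto
      (fun n : ℕ =>
        (∑ z ∈ Finset.Ioo (δ n) (n - δ n), (2 * (z : ℝ) * ((n : ℝ) - z)) ^ k n) /
          (2 ^ k n * (n : ℝ) ^ (2 * k n + 1) *
            (((k n).factorial : ℝ) ^ 2 / ((2 * k n + 1).factorial : ℝ))))
      atTop (nhds 1) := by
  have hscale : ∀ n : ℕ,
      (∑ z ∈ Ioo (δ n) (n - δ n), (2 * (z : ℝ) * ((n : ℝ) - z)) ^ k n) /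
          (2 ^ k n * (n : ℝ) ^ (2 * k n + 1) * ∫ t in (0 : ℝ)..1, (t * (1 - t)) ^ k n)
        = (∑ z ∈ Ioo (δ n) (n - δ n), ((z : ℝ) * (n - z)) ^ k n) /
          ∫ x in (0:ℝ)..n, (x * (n - x)) ^ k n := fun n => by
    simp_rw [mul_assoc (2 : ℝ), mul_pow (2 : ℝ), ← mul_sum]
    rw [integral_mul_sub_pow (n : ℝ), mul_assoc]
    exact mul_div_mul_left _ _ (by positivity : (2 : ℝ) ^ k n ≠ 0)
  have h := (tendsto_sum_mul_sub_pow_div_integral hk hδo).congr fun n => (hscale n).symm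
  exact ⟨h, by simpa only [integral_mul_one_sub_pow] using h⟩

/-- for `k = k(n) = o(√n)` (and `k = o(√δ_n)`), with
`δ_n = o(n)` and `δ_n ≥ n^{0.9}`, the Riemann sum satisfies
`Σ_{δ_n < z < n−δ_n} (2z(n−z))^k ~ 2^k·n^{2k+1}·∫₀¹ (t(1−t))^k dt`, and
consequently `Σ_{δ_n < z < n−δ_n} (2z(n−z))^k ~ 2^k·n^{2k+1}·(k!)²/(2k+1)!`. -/
theorem riemann_sum_asymptotics (k δ : ℕ → ℕ)
    (hk : Tendsto (fun n : ℕ => (k n : ℝ) / Real.sqrt n) atTop (nhds 0))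
    (hδo : Tendsto (fun n : ℕ => (δ n : ℝ) / n) atTop (nhds 0))
    (hδlb : ∀ᶠ n : ℕ in atTop, (n : ℝ) ^ (0.9 : ℝ) ≤ (δ n : ℝ))
    (hkδ : Tendsto (fun n : ℕ => (k n : ℝ) / Real.sqrt (δ n)) atTop (nhds 0)) :
    Tendsto
      (fun n : ℕ =>
        (∑ z ∈ Finset.Ioo (δ n) (n - δ n), (2 * (z : ℝ) * ((n : ℝ) - z)) ^ k n) /
          (2 ^ k n * (n : ℝ) ^ (2 * k n + 1) *
            ∫ t in (0 : ℝ)..1, (t * (1 - t)) ^ k n))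
      atTop (nhds 1) ∧
    Tendsto
      (fun n : ℕ =>
        (∑ z ∈ Finset.Ioo (δ n) (n - δ n), (2 * (z : ℝ) * ((n : ℝ) - z)) ^ k n) /
          (2 ^ k n * (n : ℝ) ^ (2 * k n + 1) *
            (((k n).factorial : ℝ) ^ 2 / ((2 * k n + 1).factorial : ℝ))))
      atTop (nhds 1) :=
  riemann_sum_asymptotics_general k δ hk hδo
end
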